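/- Let A be the (N+1)×(N+1) moment-closure coefficient matrix described by superdiagonal entries (i+1)/(2i+1), subdiagonal entries i/(2i+1), last row (a_0,...,a_N). If all roots of q_{N+1}(x) = ((N+1)/(2N+1)) P_{N+1}(x) + (N/(2N+1)) P_{N-1}(x) - Σ_{k=0}^{N} a_k P_k(x) are simple and real, then A has N+1 distinct real eigenvalues, i.e., A is diagonalizable over the reals. -/

import Mathlib

open Polynomial Matrix

/-- Entry of a matrix viewed with natural-number (0-based) indices; `0` out of range. -/
def entryR {n : ℕ} (H : Matrix (Fin n) (Fin n) ℝ) (i j : ℕ) : ℝ :=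
  if h : i < n ∧ j < n then H ⟨i, h.1⟩ ⟨j, h.2⟩ else 0

/-- `q` is the polynomial sequence associated with the unreduced lower Hessenberg matrix `H`:
`q 0 = 1` and `h_{i,i+1} q_{i+1} = X q_i - ∑_{j ≤ i} h_{i j} q_j` (0-based indices),
with the convention that the superdiagonal entry of the last row is `1`. -/
def IsAssocPolySeq {n : ℕ} (H : Matrix (Fin n) (Fin n) ℝ) (q : ℕ → Polynomial ℝ) : Prop :=
  q 0 = 1 ∧
  ∀ i : ℕ, i < n →
    Polynomial.C (if i + 1 = n then 1 else entryR H i (i + 1)) * q (i + 1) =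
      Polynomial.X * q i - ∑ j ∈ Finset.range (i + 1), Polynomial.C (entryR H i j) * q j

/-- The `n`-th Legendre polynomial, via Rodrigues' formula. -/
noncomputable def legendreP (n : ℕ) : Polynomial ℝ :=
  Polynomial.C (1 / ((2 ^ n * n.factorial : ℕ) : ℝ)) *
    (Polynomial.derivative^[n] ((Polynomial.X ^ 2 - 1) ^ n))

/-- The `(N+1)×(N+1)` moment-closure coefficient matrix: superdiagonal entries
`(i+1)/(2i+1)` and subdiagonal entries `i/(2i+1)` in rows `0,…,N-1`, last row
`(a_0, …, a_N)`, all other entries zero. -/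
noncomputable def momentA (N : ℕ) (a : Fin (N + 1) → ℝ) :
    Matrix (Fin (N + 1)) (Fin (N + 1)) ℝ :=
  fun i j =>
    if (i : ℕ) = N then a j
    else if (j : ℕ) = (i : ℕ) + 1 then (((i : ℕ) : ℝ) + 1) / (2 * ((i : ℕ) : ℝ) + 1)
    else if (i : ℕ) = (j : ℕ) + 1 then ((i : ℕ) : ℝ) / (2 * ((i : ℕ) : ℝ) + 1)
    else 0

/-- `A` is diagonalizable over the reals. -/
def RealDiagonalizable {n : ℕ} (A : Matrix (Fin n) (Fin n) ℝ) : Prop :=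
  ∃ P D : Matrix (Fin n) (Fin n) ℝ, IsUnit P.det ∧ D.IsDiag ∧ A = P * D * P⁻¹

/-!
The vector `v(x) = (P_0(x), …, P_N(x))` satisfies `A v(x) = x v(x)` whenever `q_{N+1}(x) = 0`:
rows `0, …, N-1` of `A` are Bonnet's recurrence `(2i+1) x P_i = (i+1) P_{i+1} + i P_{i-1}`, and the
last row is exactly the equation `q_{N+1}(x) = 0`. The `N+1` distinct roots of `q_{N+1}` thus give
`N+1` eigenvectors with distinct eigenvalues; they form an eigenbasis, and the characteristic
polynomial, of degree `N+1`, has exactly these roots. Bonnet's recurrence is derived from Rodrigues'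
formula `P_n = Dⁿ (X² - 1)ⁿ / (2ⁿ n!)` by the Leibniz rule.
-/

open Module.End

section Rodrigues

variable {R : Type*} [CommRing R]

theorem iterate_derivative_X_mul (m : ℕ) (f : R[X]) :
    derivative^[m + 1] (X * f) = X * derivative^[m + 1] f + (m + 1 : R[X]) * derivative^[m] f := by
  rw [mul_comm, iterate_derivative_mul_X, nsmul_eq_mul]
  push_cast
  ring

theorem iterate_derivative_X_sq_sub_one_mul (m : ℕ) (f : R[X]) :
    derivative^[m + 2] ((X ^ 2 - 1) * f) =
      (X ^ 2 - 1) * derivative^[m + 2] f + 2 * (m + 2 : R[X]) * X * derivative^[m + 1] f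
        + (m + 2 : R[X]) * (m + 1 : R[X]) * derivative^[m] f := by
  rw [show (X ^ 2 - 1) * f = X * (X * f) - f by ring, iterate_derivative_sub,
    iterate_derivative_X_mul, iterate_derivative_X_mul, iterate_derivative_X_mul]
  push_cast
  ring

theorem derivative_X_sq_sub_one_pow_succ (n : ℕ) :
    derivative (((X : R[X]) ^ 2 - 1) ^ (n + 1)) =
      ((2 * (n + 1) : ℕ) : R[X]) * (X * (X ^ 2 - 1) ^ n) := by
  rw [derivative_pow_succ, derivative_sub, derivative_X_sq, derivative_one, sub_zero, C_ofNat,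
    ← Nat.cast_succ, C_eq_natCast]
  push_cast
  ring

variable (R) in
noncomputable def rodrigues (n : ℕ) : R[X] := derivative^[n] ((X ^ 2 - 1) ^ n)

theorem derivative_rodrigues_succ (n : ℕ) :
    derivative (rodrigues R (n + 1)) =
      2 * (n + 1 : R[X]) * (X * derivative (rodrigues R n) + (n + 1 : R[X]) * rodrigues R n) := by
  rw [rodrigues, ← Function.iterate_succ_apply' derivative, Function.iterate_succ_apply,
    derivative_X_sq_sub_one_pow_succ, iterate_derivative_natCast_mul,
    iterate_derivative_X_mul, rodrigues, Function.iterate_succ_apply']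
  push_cast
  ring

theorem rodrigues_succ (n : ℕ) :
    rodrigues R (n + 1) =
      2 * (X ^ 2 - 1) * derivative (rodrigues R n) + 2 * (n + 1 : R[X]) * X * rodrigues R n := by
  rcases n with _ | n
  · simp [rodrigues, C_ofNat, one_add_one_eq_two]
  -- Expand `rodrigues R (n + 2)` twice, differentiating the power first or applying Leibniz to
  -- `(X ^ 2 - 1) * (X ^ 2 - 1) ^ (n + 1)`, and eliminate the common term `Y`.
  set Y := derivative^[n] (((X : R[X]) ^ 2 - 1) ^ (n + 1))
  have h₁ : rodrigues R (n + 2) =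
      2 * (n + 2 : R[X]) * (X * rodrigues R (n + 1) + (n + 1 : R[X]) * Y) := by
    rw [rodrigues, Function.iterate_succ_apply, derivative_X_sq_sub_one_pow_succ,
      iterate_derivative_natCast_mul, iterate_derivative_X_mul, rodrigues]
    push_cast
    ring
  have h₂ : rodrigues R (n + 2) = (X ^ 2 - 1) * derivative (rodrigues R (n + 1))
      + 2 * (n + 2 : R[X]) * X * rodrigues R (n + 1) + (n + 2 : R[X]) * (n + 1 : R[X]) * Y := by
    rw [rodrigues, pow_succ', iterate_derivative_X_sq_sub_one_mul, rodrigues,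
      Function.iterate_succ_apply' _ (n + 1)]
  push_cast
  linear_combination 2 * h₂ - h₁

theorem X_sq_sub_one_mul_derivative_rodrigues_succ (n : ℕ) :
    (X ^ 2 - 1) * derivative (rodrigues R (n + 1)) =
      (n + 1 : R[X]) * X * rodrigues R (n + 1) - 2 * (n + 1 : R[X]) ^ 2 * rodrigues R n := by
  linear_combination (X ^ 2 - 1) * derivative_rodrigues_succ (R := R) n
    - (n + 1 : R[X]) * X * rodrigues_succ (R := R) n

theorem rodrigues_add_two (n : ℕ) :
    rodrigues R (n + 2) =
      (4 * n + 6 : R[X]) * X * rodrigues R (n + 1) - 4 * (n + 1 : R[X]) ^ 2 * rodrigues R n := by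
  linear_combination (norm := (push_cast; ring)) rodrigues_succ (R := R) (n + 1)
    + 2 * X_sq_sub_one_mul_derivative_rodrigues_succ (R := R) n

end Rodrigues

section Eigenvectors

variable {K ι : Type*} [Field K] [DecidableEq K] [Fintype ι] [DecidableEq ι]
  {A : Matrix ι ι K} {μ : ι → K} {v : ι → ι → K}

theorem card_roots_toFinset_charpoly_of_hasEigenvector (hμ : Function.Injective μ)
    (hv : ∀ k, HasEigenvector (toLin' A) (μ k) (v k)) :
    A.charpoly.roots.toFinset.card = Fintype.card ι := by
  have hroot : ∀ k, μ k ∈ A.charpoly.roots.toFinset := fun k => by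
    rw [Multiset.mem_toFinset, mem_roots A.charpoly_monic.ne_zero, ← charpoly_toLin',
      ← hasEigenvalue_iff_isRoot_charpoly]
    exact hasEigenvalue_of_hasEigenvector (hv k)
  apply le_antisymm
  · calc _ ≤ Multiset.card A.charpoly.roots := Multiset.toFinset_card_le _
      _ ≤ A.charpoly.natDegree := card_roots' _
      _ = _ := charpoly_natDegree_eq_dim A
  · calc Fintype.card ι = (Finset.univ.image μ).card := (Finset.card_image_of_injective _ hμ).symm
      _ ≤ _ := Finset.card_le_card (by simpa [Finset.image_subset_iff] using hroot)

end Eigenvectors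

theorem realDiagonalizable_of_hasEigenvector {n : ℕ} {A : Matrix (Fin n) (Fin n) ℝ}
    {μ : Fin n → ℝ} {v : Fin n → Fin n → ℝ} (hμ : Function.Injective μ)
    (hv : ∀ k, HasEigenvector (toLin' A) (μ k) (v k)) :
    RealDiagonalizable A := by
  set P := (of v)ᵀ
  have hP : IsUnit P.det := (isUnit_iff_isUnit_det P).1 <| linearIndependent_cols_iff_isUnit.1 <|
    eigenvectors_linearIndependent' _ μ hμ v hv
  have hAP : A * P = P * diagonal μ := by
    ext i k
    have := congrFun (mem_eigenspace_iff.1 (hv k).1) i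
    rw [mul_diagonal, Matrix.mul_apply]
    simpa [P, mulVec, dotProduct, mul_comm] using this
  refine ⟨P, diagonal μ, hP, isDiag_diagonal μ, ?_⟩
  rw [← hAP, mul_assoc, mul_nonsing_inv P hP, mul_one]

theorem legendreP_eq_C_mul_rodrigues (n : ℕ) :
    legendreP n = C (((2 ^ n * n.factorial : ℕ) : ℝ)⁻¹) * rodrigues ℝ n := by
  rw [legendreP, one_div, rodrigues]

theorem mul_eval_legendreP (n : ℕ) (x : ℝ) :
    x * (legendreP n).eval x =
      ((n + 1) / (2 * n + 1)) * (legendreP (n + 1)).eval x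
        + (n / (2 * n + 1)) * (legendreP (n - 1)).eval x := by
  -- At `n = 0` the junk term `legendreP (0 - 1) = legendreP 0` carries the coefficient `0`.
  rcases n with _ | k
  · simp [legendreP, one_add_one_eq_two]
  have hk := congrArg (eval x) (rodrigues_add_two (R := ℝ) k)
  simp only [eval_sub, eval_mul, eval_add, eval_X, eval_pow, eval_natCast, eval_ofNat, eval_one] at hk
  simp only [legendreP_eq_C_mul_rodrigues, eval_mul, eval_C, Nat.add_sub_cancel, hk,
    Nat.factorial_succ, pow_succ]
  push_cast
  field_simp
  ring

theorem momentA_apply_of_ne {N : ℕ} (a : Fin (N + 1) → ℝ) {i : Fin (N + 1)} (hi : (i : ℕ) ≠ N)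
    (j : Fin (N + 1)) :
    momentA N a i j =
      (if (j : ℕ) = i + 1 then ((i : ℝ) + 1) / (2 * i + 1) else 0)
        + (if (j : ℕ) + 1 = i then (i : ℝ) / (2 * i + 1) else 0) := by
  simp only [momentA, if_neg hi]
  split_ifs <;> first | omega | simp

theorem momentA_mulVec_apply_of_ne {N : ℕ} (a : Fin (N + 1) → ℝ) (f : ℕ → ℝ) {i : Fin (N + 1)}
    (hi : (i : ℕ) ≠ N) :
    (momentA N a *ᵥ fun j => f j) i =
      ((i : ℝ) + 1) / (2 * i + 1) * f (i + 1) + (i : ℝ) / (2 * i + 1) * f (i - 1) := by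
  simp only [mulVec, dotProduct, momentA_apply_of_ne a hi, add_mul, ite_mul, zero_mul,
    Finset.sum_add_distrib]
  rw [Fin.sum_univ_eq_sum_range (fun j => if j = i + 1 then _ * f j else 0),
    Fin.sum_univ_eq_sum_range (fun j => if j + 1 = i then _ * f j else 0),
    Finset.sum_ite_eq' _ _ (fun j => _ * f j), if_pos (Finset.mem_range.2 (by omega))]
  congr 1
  rcases Nat.eq_zero_or_pos (i : ℕ) with h0 | hpos
  · simp [h0]
  · simp_rw [show ∀ j, j + 1 = (i : ℕ) ↔ j = i - 1 by omega]
    rw [Finset.sum_ite_eq' _ _ (fun j => _ * f j), if_pos (Finset.mem_range.2 (by omega))]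

noncomputable def legendreVector (N : ℕ) (x : ℝ) : Fin (N + 1) → ℝ :=
  fun i => (legendreP i).eval x

theorem legendreVector_ne_zero (N : ℕ) (x : ℝ) : legendreVector N x ≠ 0 := fun h => by
  simpa [legendreVector, legendreP] using congrFun h 0

theorem hasEigenvector_legendreVector {N : ℕ} (a : Fin (N + 1) → ℝ) {x : ℝ}
    (hx : ∑ k, a k * (legendreP k).eval x =
      ((N + 1) / (2 * N + 1)) * (legendreP (N + 1)).eval x
        + (N / (2 * N + 1)) * (legendreP (N - 1)).eval x) :
    HasEigenvector (toLin' (momentA N a)) x (legendreVector N x) := by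
  refine ⟨mem_eigenspace_iff.2 ?_, legendreVector_ne_zero N x⟩
  ext i
  rw [toLin'_apply, Pi.smul_apply, smul_eq_mul, legendreVector, mul_eval_legendreP]
  by_cases hi : (i : ℕ) = N
  · simp only [mulVec, dotProduct, momentA, hi, ↓reduceIte, legendreVector, hx]
  · exact momentA_mulVec_apply_of_ne a (fun k => (legendreP k).eval x) hi

/-- if all roots of `q_{N+1}` (a polynomial of degree `N+1`) are simple
and real, i.e. it has `N+1` distinct real roots, then the moment-closure matrix has
`N+1` distinct real eigenvalues and is diagonalizable over ℝ. -/
theorem momentA_realDiagonalizable (N : ℕ) (a : Fin (N + 1) → ℝ)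
    (qtop : Polynomial ℝ)
    (hqtop : qtop =
      Polynomial.C (((N : ℝ) + 1) / (2 * (N : ℝ) + 1)) * legendreP (N + 1) +
        Polynomial.C ((N : ℝ) / (2 * (N : ℝ) + 1)) * legendreP (N - 1) -
        ∑ k : Fin (N + 1), Polynomial.C (a k) * legendreP (k : ℕ))
    (hsimple : qtop.roots.toFinset.card = N + 1) :
    (Matrix.charpoly (momentA N a)).roots.toFinset.card = N + 1 ∧
      RealDiagonalizable (momentA N a) := by
  let e : Fin (N + 1) ≃ qtop.roots.toFinset :=
    (finCongr hsimple.symm).trans qtop.roots.toFinset.equivFin.symm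
  let μ : Fin (N + 1) → ℝ := fun k => e k
  have hμ : Function.Injective μ := Subtype.val_injective.comp e.injective
  have hv : ∀ k, HasEigenvector (toLin' (momentA N a)) (μ k)
      (legendreVector N (μ k)) := by
    intro k
    apply hasEigenvector_legendreVector
    have hroot := isRoot_of_mem_roots (Multiset.mem_toFinset.1 (e k).2)
    simp only [hqtop, IsRoot.def, eval_sub, eval_add, eval_mul, eval_C, eval_finsetSum] at hroot
    linarith
  exact ⟨by simpa using card_roots_toFinset_charpoly_of_hasEigenvector hμ hv,
    realDiagonalizable_of_hasEigenvector hμ hv⟩
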